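/- Consider the homogeneous linear system from the fully discrete scheme: finite element functions (U, P, X, κ, F) satisfying (1/τ)ρ⟨U,ξ⟩ + 2μ⟨D_s^m U, D_s^m ξ⟩ - ⟨P, ∇_s·ξ⟩ - α⟨F,ξ⟩ = 0 for all ξ; ⟨∇_s·U, η⟩ = 0 for all η; (1/τ)⟨X,χ⟩ = ⟨U,χ⟩ for all χ; ⟨κ,η⟩ + ⟨∇_s X, ∇_s η⟩ = 0 for all η; ⟨F,χ⟩ - ⟨∇_s κ, ∇_s χ⟩ = 0 for all χ. If ρ > 0 and τ > 0 then the appropriate test function choices yield ρ⟨U,U⟩ + 2τμ⟨D_s^m U, D_s^m U⟩ + α⟨κ,κ⟩ = 0, and hence U = 0, X = 0, κ = 0, F = 0. -/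
import Mathlib


open scoped RealInnerProductSpace

/-- Uniqueness for the homogeneous fully discrete system: in the (finite element)
inner product spaces V (velocities/positions/curvatures) and Q (pressures), with
Ds the discrete rate-of-deformation operator, Grad the surface gradient operator
and b ξ P = ⟨P, ∇_s·ξ⟩ the pressure–divergence pairing, if (U,P,X,κ,F) solves
the homogeneous system, ρ > 0 and τ > 0, then the energy identity
ρ⟨U,U⟩ + 2τμ⟨D_s U, D_s U⟩ + α⟨κ,κ⟩ = 0 holds, and U = 0, X = 0, κ = 0, F = 0. -/
theorem stmt15 (V Q W1 W2 : Type*)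
    [NormedAddCommGroup V] [InnerProductSpace ℝ V]
    [NormedAddCommGroup Q] [InnerProductSpace ℝ Q]
    [NormedAddCommGroup W1] [InnerProductSpace ℝ W1]
    [NormedAddCommGroup W2] [InnerProductSpace ℝ W2]
    (Ds : V →ₗ[ℝ] W1) (Grad : V →ₗ[ℝ] W2) (b : V →ₗ[ℝ] Q →ₗ[ℝ] ℝ)
    (ρ μc α τ : ℝ) (hρ : 0 < ρ) (hτ : 0 < τ) (hμ : 0 ≤ μc) (hα : 0 ≤ α)
    (U X κv F : V) (P : Q)
    (h1 : ∀ ξ : V, (1 / τ) * ρ * ⟪U, ξ⟫ + 2 * μc * ⟪Ds U, Ds ξ⟫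
            - b ξ P - α * ⟪F, ξ⟫ = 0)
    (h2 : ∀ η : Q, b U η = 0)
    (h3 : ∀ χ : V, (1 / τ) * ⟪X, χ⟫ = ⟪U, χ⟫)
    (h4 : ∀ η : V, ⟪κv, η⟫ + ⟪Grad X, Grad η⟫ = 0)
    (h5 : ∀ χ : V, ⟪F, χ⟫ - ⟪Grad κv, Grad χ⟫ = 0) :
    ρ * ⟪U, U⟫ + 2 * τ * μc * ⟪Ds U, Ds U⟫ + α * ⟪κv, κv⟫ = 0 ∧
    U = 0 ∧ X = 0 ∧ κv = 0 ∧ F = 0 := by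
  have hτ' : τ ≠ 0 := hτ.ne'
  have hFU : ⟪F, U⟫ = (1 / τ) * (-⟪κv, κv⟫) := by
    have e3 := h3 F
    have e5 := h5 X
    have e4 := h4 κv
    have hGG : ⟪Grad κv, Grad X⟫ = -⟪κv, κv⟫ := by
      rw [real_inner_comm]; linarith
    have hFX : ⟪F, X⟫ = -⟪κv, κv⟫ := by linarith
    have c1 : ⟪U, F⟫ = ⟪F, U⟫ := real_inner_comm F U
    have c2 : ⟪X, F⟫ = ⟪F, X⟫ := real_inner_comm F X
    rw [← c1, ← e3, c2, hFX]
  have e1 := h1 U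
  rw [h2 P, hFU] at e1
  have hE : ρ * ⟪U, U⟫ + 2 * τ * μc * ⟪Ds U, Ds U⟫ + α * ⟪κv, κv⟫ = 0 := by
    field_simp at e1; linear_combination e1
  have hU2 : (0:ℝ) ≤ ⟪U, U⟫ := real_inner_self_nonneg
  have hD2 : (0:ℝ) ≤ ⟪Ds U, Ds U⟫ := real_inner_self_nonneg
  have hK2 : (0:ℝ) ≤ ⟪κv, κv⟫ := real_inner_self_nonneg
  have hU : U = 0 := by
    rw [← inner_self_eq_zero (𝕜 := ℝ) (x := U)]
    nlinarith [mul_nonneg hα hK2, mul_nonneg hρ.le hU2,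
      mul_nonneg (mul_nonneg (by linarith : (0:ℝ) ≤ 2 * τ) hμ) hD2]
  have hX : X = 0 := by
    rw [← inner_self_eq_zero (𝕜 := ℝ) (x := X)]
    have := h3 X
    rw [hU, inner_zero_left] at this
    field_simp at this
    simpa using this
  have hK : κv = 0 := by
    rw [← inner_self_eq_zero (𝕜 := ℝ) (x := κv)]
    have := h4 κv
    rw [hX, map_zero, inner_zero_left] at this
    linarith
  have hF : F = 0 := by
    rw [← inner_self_eq_zero (𝕜 := ℝ) (x := F)]
    have := h5 F
    rw [hK, map_zero, inner_zero_left] at this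
    linarith
  exact ⟨hE, hU, hX, hK, hF⟩
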